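/- arXiv:2306.03426 — 2 statements merged into one kernel-verified Lean document; each statement's English description precedes it below -/
import Mathlib

section
/- Let u_1, u ∈ F_{q^m}, not both zero. Then u_1·x + u·x^{-1} ≠ R(x)^{q^m} - R(x) for any rational function R(x) over the algebraic closure of F_p. -/
open Polynomial RatFunc
open scoped nonZeroDivisors

section Aux

variable {K : Type*} [Field K]

lemma myIntDegree_pow (x : RatFunc K) (hx : x ≠ 0) (n : ℕ) :
    (x ^ n).intDegree = n * x.intDegree := by
  induction n with
  | zero => simp [RatFunc.intDegree_one]
  | succ k ih =>
    rw [pow_succ, RatFunc.intDegree_mul (pow_ne_zero _ hx) hx, ih]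
    push_cast; ring

lemma myIntDegree_inv (x : RatFunc K) : (x⁻¹).intDegree = -x.intDegree := by
  by_cases hx : x = 0
  · simp [hx, RatFunc.intDegree_zero]
  · have h := RatFunc.intDegree_mul hx (inv_ne_zero hx)
    rw [mul_inv_cancel₀ hx, RatFunc.intDegree_one] at h
    linarith

lemma myIntDegree_dominant {x y : RatFunc K} (hx : x ≠ 0) (hy : y ≠ 0)
    (h : y.intDegree < x.intDegree) : (x + y).intDegree = x.intDegree := by
  have hxy : x + y ≠ 0 := by
    intro h0
    have : x = -y := eq_neg_of_add_eq_zero_left h0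
    rw [this, RatFunc.intDegree_neg] at h
    exact lt_irrefl _ h
  have le1 : (x + y).intDegree ≤ x.intDegree := by
    have := RatFunc.intDegree_add_le hy hxy
    omega
  have le2 : x.intDegree ≤ max (x + y).intDegree (-y).intDegree := by
    have hne : (x + y) + (-y) ≠ 0 := by rwa [add_neg_cancel_right]
    have := RatFunc.intDegree_add_le (neg_ne_zero.mpr hy) hne
    rwa [add_neg_cancel_right] at this
  rw [RatFunc.intDegree_neg] at le2
  omega

lemma aux_ne (n : ℕ) (hn : 2 ≤ n) (c d : K) (hc : c ≠ 0) (S : RatFunc K) :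
    RatFunc.C c * RatFunc.X + RatFunc.C d * RatFunc.X⁻¹ ≠ S ^ n - S := by
  intro heq
  have hCc : (RatFunc.C c : RatFunc K) ≠ 0 := by
    simpa using hc
  have hX : (RatFunc.X : RatFunc K) ≠ 0 := RatFunc.X_ne_zero
  have hA : RatFunc.C c * RatFunc.X ≠ 0 := mul_ne_zero hCc hX
  have hAdeg : (RatFunc.C c * RatFunc.X).intDegree = 1 := by
    rw [RatFunc.intDegree_mul hCc hX, RatFunc.intDegree_C, RatFunc.intDegree_X]; ring
  have hLdeg : (RatFunc.C c * RatFunc.X + RatFunc.C d * RatFunc.X⁻¹).intDegree = 1 := by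
    by_cases hd : d = 0
    · simp [hd, hAdeg]
    · have hCd : (RatFunc.C d : RatFunc K) ≠ 0 := by simpa using hd
      have hB : RatFunc.C d * RatFunc.X⁻¹ ≠ 0 := mul_ne_zero hCd (inv_ne_zero hX)
      have hBdeg : (RatFunc.C d * RatFunc.X⁻¹).intDegree = -1 := by
        rw [RatFunc.intDegree_mul hCd (inv_ne_zero hX), RatFunc.intDegree_C,
          myIntDegree_inv, RatFunc.intDegree_X]; ring
      rw [myIntDegree_dominant hA hB (by omega), hAdeg]
  have hL : RatFunc.C c * RatFunc.X + RatFunc.C d * RatFunc.X⁻¹ ≠ 0 := by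
    intro h0
    rw [h0, RatFunc.intDegree_zero] at hLdeg
    exact one_ne_zero hLdeg.symm
  have hS : S ≠ 0 := by
    intro h0
    rw [h0, zero_pow (by omega), sub_zero] at heq
    exact hL heq
  have hRHS : S ^ n - S ≠ 0 := heq ▸ hL
  have hRHSdeg : (S ^ n - S).intDegree = 1 := by rw [← heq]; exact hLdeg
  have hSn : S ^ n ≠ 0 := pow_ne_zero _ hS
  have hnS : -S ≠ 0 := neg_ne_zero.mpr hS
  have hpow : (S ^ n).intDegree = n * S.intDegree := myIntDegree_pow S hS n
  rcases le_or_gt S.intDegree 0 with h0 | h0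
  · have hne : (n : ℤ) * S.intDegree ≤ 0 := mul_nonpos_of_nonneg_of_nonpos (by positivity) h0
    have hle : (S ^ n + (-S)).intDegree ≤ max (S ^ n).intDegree (-S).intDegree :=
      RatFunc.intDegree_add_le hnS (by rwa [← sub_eq_add_neg])
    rw [← sub_eq_add_neg, hRHSdeg, hpow, RatFunc.intDegree_neg] at hle
    have hm : max ((n : ℤ) * S.intDegree) S.intDegree ≤ 0 := max_le hne h0
    linarith
  · have h2e : S.intDegree < (n : ℤ) * S.intDegree := by
      have h2 : 2 * S.intDegree ≤ (n : ℤ) * S.intDegree := by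
        apply mul_le_mul_of_nonneg_right _ h0.le
        exact_mod_cast hn
      linarith
    have hdom : (S ^ n + (-S)).intDegree = (S ^ n).intDegree := by
      apply myIntDegree_dominant hSn hnS
      rw [RatFunc.intDegree_neg, hpow]; exact h2e
    rw [← sub_eq_add_neg, hRHSdeg, hpow] at hdom
    linarith

/-- The substitution `X ↦ X⁻¹` on polynomials, with values in `RatFunc`. -/
noncomputable def psi : K[X] →+* RatFunc K :=
  Polynomial.eval₂RingHom (RatFunc.C : K →+* RatFunc K) (RatFunc.X)⁻¹

lemma psi_key (p : K[X]) :
    (RatFunc.X : RatFunc K) ^ p.natDegree * psi p =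
      algebraMap K[X] (RatFunc K)
        (∑ i ∈ Finset.range (p.natDegree + 1),
          Polynomial.C (p.coeff i) * Polynomial.X ^ (p.natDegree - i)) := by
  have hX : (RatFunc.X : RatFunc K) ≠ 0 := RatFunc.X_ne_zero
  rw [psi, coe_eval₂RingHom, Polynomial.eval₂_eq_sum_range, map_sum, Finset.mul_sum]
  apply Finset.sum_congr rfl
  intro i hi
  rw [Finset.mem_range] at hi
  have hle : i ≤ p.natDegree := by omega
  rw [map_mul, map_pow, RatFunc.algebraMap_C, RatFunc.algebraMap_X]
  rw [← mul_assoc, mul_comm ((RatFunc.X : RatFunc K) ^ p.natDegree), mul_assoc]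
  congr 1
  rw [inv_pow, mul_inv_eq_iff_eq_mul₀ (pow_ne_zero i hX), ← pow_add]
  congr 1
  omega

lemma psi_injective : Function.Injective (psi : K[X] →+* RatFunc K) := by
  rw [injective_iff_map_eq_zero]
  intro p hp
  by_contra hp0
  have key := psi_key p
  rw [hp, mul_zero] at key
  have hq0 : (∑ i ∈ Finset.range (p.natDegree + 1),
      Polynomial.C (p.coeff i) * Polynomial.X ^ (p.natDegree - i)) = 0 := by
    apply RatFunc.algebraMap_injective K
    rw [← key, map_zero]
  have hc0 : (∑ i ∈ Finset.range (p.natDegree + 1),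
      Polynomial.C (p.coeff i) * Polynomial.X ^ (p.natDegree - i)).coeff 0 = p.leadingCoeff := by
    rw [Polynomial.finset_sum_coeff]
    rw [Finset.sum_eq_single p.natDegree]
    · rw [Nat.sub_self, pow_zero, mul_one, Polynomial.coeff_C_zero]; rfl
    · intro i hi hne
      rw [Finset.mem_range] at hi
      have : p.natDegree - i ≠ 0 := by omega
      simp [Polynomial.coeff_C_mul, Polynomial.coeff_X_pow, Ne.symm this]
    · intro h; exact absurd (Finset.self_mem_range_succ _) h
  rw [hq0] at hc0
  simp only [Polynomial.coeff_zero] at hc0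
  exact hp0 (Polynomial.leadingCoeff_eq_zero.mp hc0.symm)

lemma psi_nzd : (K[X])⁰ ≤ (RatFunc K)⁰.comap (psi : K[X] →+* RatFunc K) := by
  intro p hp
  rw [mem_nonZeroDivisors_iff_ne_zero] at hp
  rw [Submonoid.mem_comap, mem_nonZeroDivisors_iff_ne_zero]
  intro h0
  exact hp (psi_injective (by rw [h0, map_zero]))

/-- The substitution `X ↦ X⁻¹` on rational functions. -/
noncomputable def Phi : RatFunc K →+* RatFunc K := RatFunc.liftRingHom psi psi_nzd

lemma Phi_algebraMap (p : K[X]) : (Phi : RatFunc K →+* RatFunc K) (algebraMap K[X] (RatFunc K) p) = psi p := by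
  have h := RatFunc.liftRingHom_apply_div (psi : K[X] →+* RatFunc K) psi_nzd p 1
  rw [map_one, map_one, div_one, div_one] at h
  exact h

lemma Phi_C (a : K) : (Phi : RatFunc K →+* RatFunc K) (RatFunc.C a) = RatFunc.C a := by
  conv_lhs => rw [← RatFunc.algebraMap_C a]
  rw [Phi_algebraMap, psi, coe_eval₂RingHom, Polynomial.eval₂_C]

lemma Phi_X : (Phi : RatFunc K →+* RatFunc K) RatFunc.X = RatFunc.X⁻¹ := by
  conv_lhs => rw [← RatFunc.algebraMap_X (K := K)]
  rw [Phi_algebraMap, psi, coe_eval₂RingHom, Polynomial.eval₂_X]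

lemma Phi_X_inv : (Phi : RatFunc K →+* RatFunc K) RatFunc.X⁻¹ = RatFunc.X := by
  rw [map_inv₀, Phi_X, inv_inv]

end Aux

theorem stmt11 (q m : ℕ) (hq : IsPrimePow q) (hm : 0 < m)
    (F : Type*) [Field F] [Fintype F] (hF : Fintype.card F = q ^ m)
    (u1 u : F) (hu : ¬(u1 = 0 ∧ u = 0)) (R : RatFunc (AlgebraicClosure F)) :
    RatFunc.C (algebraMap F (AlgebraicClosure F) u1) * RatFunc.X
      + RatFunc.C (algebraMap F (AlgebraicClosure F) u) * RatFunc.X⁻¹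
      ≠ R ^ (q ^ m) - R := by
  have hq2 : 2 ≤ q := hq.two_le
  have hQ : 2 ≤ q ^ m := le_trans hq2 (Nat.le_self_pow hm.ne' q)
  by_cases hu1 : u1 = 0
  · -- then u ≠ 0; apply Phi to reduce to the other case
    have hune : u ≠ 0 := fun h => hu ⟨hu1, h⟩
    intro heq
    have h2 := congrArg (Phi : RatFunc (AlgebraicClosure F) →+* RatFunc (AlgebraicClosure F)) heq
    rw [map_add, map_sub, map_pow, map_mul, map_mul, Phi_C, Phi_C, Phi_X, Phi_X_inv] at h2
    rw [add_comm] at h2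
    exact aux_ne (q ^ m) hQ _ _
      ((map_ne_zero (algebraMap F (AlgebraicClosure F))).mpr hune) (Phi R) h2
  · exact aux_ne (q ^ m) hQ _ _
      ((map_ne_zero (algebraMap F (AlgebraicClosure F))).mpr hu1) R
end

section
/- For every positive integer α, the number W(α) of squarefree divisors of α satisfies W(α) < 4514.7 · α^{1/8}. -/
open Finset Real

set_option maxRecDepth 100000

def T256 : Finset ℕ := {2, 3, 5, 7, 11, 13, 17, 19, 23, 29, 31, 37, 41, 43, 47, 53, 59, 61, 67, 71, 73, 79, 83, 89, 97, 101, 103, 107, 109, 113, 127, 131, 137, 139, 149, 151, 157, 163, 167, 173, 179, 181, 191, 193, 197, 199, 211, 223, 227, 229, 233, 239, 241, 251}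

set_option maxHeartbeats 4000000 in
lemma primesBelow_eq : Nat.primesBelow 256 = T256 := by decide

lemma T256_card : T256.card = 54 := by decide

lemma T256_prod : ∏ p ∈ T256, p = 64266330917908644872330635228106713310880186591609208114244758680898150367880703152525200743234420230 := by decide

lemma rpow_le_two {x : ℝ} (hx : 0 ≤ x) (h : x ≤ 256) : x ^ ((1:ℝ)/8) ≤ 2 := by
  have h256 : ((256:ℝ)) ^ ((1:ℝ)/8) = 2 := by
    rw [show (256:ℝ) = (2:ℝ) ^ (8:ℕ) by norm_num, ← Real.rpow_natCast (2:ℝ) 8,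
      ← Real.rpow_mul (by norm_num)]
    norm_num
  calc x ^ ((1:ℝ)/8) ≤ (256:ℝ) ^ ((1:ℝ)/8) :=
        Real.rpow_le_rpow hx h (by norm_num)
    _ = 2 := h256

lemma two_le_rpow {x : ℝ} (h : 256 ≤ x) : 2 ≤ x ^ ((1:ℝ)/8) := by
  have h256 : ((256:ℝ)) ^ ((1:ℝ)/8) = 2 := by
    rw [show (256:ℝ) = (2:ℝ) ^ (8:ℕ) by norm_num, ← Real.rpow_natCast (2:ℝ) 8,
      ← Real.rpow_mul (by norm_num)]
    norm_num
  calc (2:ℝ) = (256:ℝ) ^ ((1:ℝ)/8) := h256.symm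
    _ ≤ x ^ ((1:ℝ)/8) := Real.rpow_le_rpow (by norm_num) h (by norm_num)

theorem stmt12 (a : ℕ) (ha : 0 < a) :
    (2 : ℝ) ^ a.primeFactors.card < 4514.7 * (a : ℝ) ^ ((1 : ℝ) / 8) := by
  set S := a.primeFactors with hSdef
  have hprime : ∀ p ∈ S, p.Prime := fun p hp => Nat.prime_of_mem_primeFactors hp
  have hpos : ∀ p ∈ S, (0:ℝ) < (p:ℝ) ^ ((1:ℝ)/8) := fun p hp =>
    Real.rpow_pos_of_pos (by exact_mod_cast (hprime p hp).pos) _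
  set g : ℕ → ℝ := fun p => 2 / (p:ℝ) ^ ((1:ℝ)/8) with hg
  have h1 : (2:ℝ) ^ S.card = (∏ p ∈ S, g p) * ∏ p ∈ S, (p:ℝ) ^ ((1:ℝ)/8) := by
    rw [← Finset.prod_mul_distrib, ← Finset.prod_const (2:ℝ)]
    exact Finset.prod_congr rfl fun p hp =>
      (div_mul_cancel₀ 2 (ne_of_gt (hpos p hp))).symm
  have h2 : ∏ p ∈ S, (p:ℝ) ^ ((1:ℝ)/8) ≤ (a:ℝ) ^ ((1:ℝ)/8) := by
    rw [Real.finset_prod_rpow S _ (fun p _ => Nat.cast_nonneg p) _]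
    apply Real.rpow_le_rpow (Finset.prod_nonneg fun p _ => Nat.cast_nonneg p) _ (by norm_num)
    rw [← Nat.cast_prod]
    exact_mod_cast Nat.le_of_dvd ha (Nat.prod_primeFactors_dvd a)
  have h3 : ∏ p ∈ S, g p < 4514.7 := by
    have hone_le : ∀ p ∈ T256, (1:ℝ) ≤ g p := by
      intro p hp
      have hplt : p < 256 ∧ p.Prime := Nat.mem_primesBelow.mp (primesBelow_eq ▸ hp)
      have h2le : (p:ℝ) ^ ((1:ℝ)/8) ≤ 2 :=
        rpow_le_two (by positivity) (by exact_mod_cast hplt.1.le)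
      have hppos : (0:ℝ) < (p:ℝ) ^ ((1:ℝ)/8) :=
        Real.rpow_pos_of_pos (by exact_mod_cast hplt.2.pos) _
      rw [hg, le_div_iff₀ hppos, one_mul]
      exact h2le
    have hsplit : ∏ p ∈ S, g p =
        (∏ p ∈ S.filter (· ∈ T256), g p) * ∏ p ∈ S.filter (¬ · ∈ T256), g p :=
      (Finset.prod_filter_mul_prod_filter_not S _ g).symm
    have hbig : ∏ p ∈ S.filter (¬ · ∈ T256), g p ≤ 1 := by
      apply Finset.prod_le_one
      · intro p hp
        exact le_of_lt (div_pos two_pos (hpos p (Finset.mem_filter.mp hp).1))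
      · intro p hp
        obtain ⟨hpS, hpT⟩ := Finset.mem_filter.mp hp
        have hp256 : 256 ≤ p := by
          by_contra h
          push_neg at h
          exact hpT (primesBelow_eq ▸ Nat.mem_primesBelow.mpr ⟨h, hprime p hpS⟩)
        have := two_le_rpow (x := (p:ℝ)) (by exact_mod_cast hp256)
        rw [hg]
        exact div_le_one_of_le₀ this (le_of_lt (hpos p hpS))
    have hsub : ∏ p ∈ S.filter (· ∈ T256), g p ≤ ∏ p ∈ T256, g p := by
      have hss : S.filter (· ∈ T256) ⊆ T256 := fun p hp => (Finset.mem_filter.mp hp).2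
      rw [← Finset.prod_sdiff hss]
      have hone : (1:ℝ) ≤ ∏ p ∈ T256 \ S.filter (· ∈ T256), g p := by
        have := Finset.prod_le_prod (s := T256 \ S.filter (· ∈ T256))
          (f := fun _ => (1:ℝ)) (g := g) (fun _ _ => zero_le_one)
          (fun p hp => hone_le p (Finset.mem_sdiff.mp hp).1)
        simpa using this
      have hnn : 0 ≤ ∏ p ∈ S.filter (· ∈ T256), g p :=
        Finset.prod_nonneg fun p hp =>
          le_of_lt (div_pos two_pos (hpos p (Finset.mem_filter.mp hp).1))
      exact le_mul_of_one_le_left hnn hone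
    have hT : ∏ p ∈ T256, g p < 4514.7 := by
      have hprodT : ∏ p ∈ T256, g p =
          2 ^ 54 / ((64266330917908644872330635228106713310880186591609208114244758680898150367880703152525200743234420230 : ℝ)) ^ ((1:ℝ)/8) := by
        rw [hg]
        rw [Finset.prod_div_distrib, Finset.prod_const, T256_card]
        congr 1
        rw [Real.finset_prod_rpow T256 _ (fun p _ => Nat.cast_nonneg p) _]
        congr 1
        rw [← Nat.cast_prod, T256_prod]
        norm_num
      rw [hprodT]
      set P : ℝ := (64266330917908644872330635228106713310880186591609208114244758680898150367880703152525200743234420230 : ℝ) with hP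
      have hq : ((3990165129352 : ℝ)) ≤ P ^ ((1:ℝ)/8) := by
        have h8 : ((3990165129352 : ℝ)) ^ (8:ℕ) ≤ P := by norm_num [hP]
        calc (3990165129352 : ℝ) = (((3990165129352:ℝ) ^ (8:ℕ))) ^ ((1:ℝ)/8) := by
              rw [← Real.rpow_natCast (3990165129352:ℝ) 8, ← Real.rpow_mul (by norm_num)]
              norm_num
          _ ≤ P ^ ((1:ℝ)/8) := Real.rpow_le_rpow (by positivity) h8 (by norm_num)
      have hPpos : (0:ℝ) < P ^ ((1:ℝ)/8) := Real.rpow_pos_of_pos (by norm_num [hP]) _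
      rw [div_lt_iff₀ hPpos]
      calc (2:ℝ) ^ 54 < 4514.7 * 3990165129352 := by norm_num
        _ ≤ 4514.7 * P ^ ((1:ℝ)/8) := by
            apply mul_le_mul_of_nonneg_left hq (by norm_num)
    calc ∏ p ∈ S, g p = _ := hsplit
      _ ≤ (∏ p ∈ S.filter (· ∈ T256), g p) * 1 := by
          apply mul_le_mul_of_nonneg_left hbig
          exact Finset.prod_nonneg fun p hp =>
            le_of_lt (div_pos two_pos (hpos p (Finset.mem_filter.mp hp).1))
      _ = ∏ p ∈ S.filter (· ∈ T256), g p := mul_one _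
      _ ≤ ∏ p ∈ T256, g p := hsub
      _ < 4514.7 := hT
  have hgnonneg : 0 ≤ ∏ p ∈ S, g p :=
    Finset.prod_nonneg fun p hp => le_of_lt (div_pos two_pos (hpos p hp))
  have hrpos : (0:ℝ) < (a:ℝ) ^ ((1:ℝ)/8) :=
    Real.rpow_pos_of_pos (by exact_mod_cast ha) _
  calc (2:ℝ) ^ S.card = (∏ p ∈ S, g p) * ∏ p ∈ S, (p:ℝ) ^ ((1:ℝ)/8) := h1
    _ ≤ (∏ p ∈ S, g p) * (a:ℝ) ^ ((1:ℝ)/8) := mul_le_mul_of_nonneg_left h2 hgnonneg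
    _ < 4514.7 * (a:ℝ) ^ ((1:ℝ)/8) := mul_lt_mul_of_pos_right h3 hrpos
end
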